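/- Suppose F: ℝⁿ → ℝᵐ satisfies the local tangential cone condition with η ∈ [0, 1/2), F(x*) = 0, and for every index set I in the finite admissible collection 𝓘^{α,β} the submatrix F_I′(x) has full column rank for all x with condition number bounded by κ ≥ 1. Let the random index set 𝓘_k be drawn uniformly from 𝓘^{α,β} (independently at each step), and define x_{k+1} = x_k − γ · (‖F_{𝓘_k}(x_k)‖₂² / ‖F_{𝓘_k}′(x_k)ᵀF_{𝓘_k}(x_k)‖₂²) · F_{𝓘_k}′(x_k)ᵀF_{𝓘_k}(x_k) with γ ∈ (0, 2(1−η)). Then E[‖x_{k+1} − x*‖₂²] ≤ (1 − (2γ(1−η) − γ²)/((1+η²)κ²)) · E[‖x_k − x*‖₂²]. -/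

import Mathlib

open Finset

set_option maxHeartbeats 2000000 in
/-- expected linear convergence of the RGFBK method. The index set
is drawn uniformly from the finite admissible collection 𝓘, so the conditional
expectation of ‖x_{k+1} − x*‖² given x_k is the uniform average over 𝓘. -/
theorem rgfbk_expected_contraction {n m : ℕ}
    (F : (Fin n → ℝ) → Fin m → ℝ)
    (F' : (Fin n → ℝ) → Matrix (Fin m) (Fin n) ℝ) (η : ℝ)
    (hη0 : 0 ≤ η) (hη : η < 1/2)
    (hcone : ∀ (i : Fin m) (x₁ x₂ : Fin n → ℝ),
      |F x₁ i - F x₂ i - ∑ j, F' x₁ i j * (x₁ j - x₂ j)| ≤ η * |F x₁ i - F x₂ i|)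
    (xs : Fin n → ℝ) (hroot : ∀ i, F xs i = 0)
    (𝓘 : Finset (Finset (Fin m))) (h𝓘 : 𝓘.Nonempty)
    (σmin σmax : Finset (Fin m) → (Fin n → ℝ) → ℝ)
    (hmin : ∀ I ∈ 𝓘, ∀ x : Fin n → ℝ, 0 < σmin I x)
    (hmax : ∀ I ∈ 𝓘, ∀ x : Fin n → ℝ, 0 < σmax I x)
    (hlow : ∀ I ∈ 𝓘, ∀ x v : Fin n → ℝ,
      (σmin I x)^2 * ∑ j, (v j)^2 ≤ ∑ i ∈ I, (∑ j, F' x i j * v j)^2)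
    (hup : ∀ I ∈ 𝓘, ∀ x v : Fin n → ℝ,
      ∑ i ∈ I, (∑ j, F' x i j * v j)^2 ≤ (σmax I x)^2 * ∑ j, (v j)^2)
    (κ : ℝ) (hκ : 1 ≤ κ)
    (hcond : ∀ I ∈ 𝓘, ∀ x : Fin n → ℝ, σmax I x / σmin I x ≤ κ)
    (γ : ℝ) (hγ0 : 0 < γ) (hγ : γ < 2*(1-η))
    (xk : Fin n → ℝ)
    (hdenom : ∀ I ∈ 𝓘, (∑ i ∈ I, (F xk i)^2) ≠ 0 →
      (∑ j, (∑ i ∈ I, F xk i * F' xk i j)^2) ≠ 0)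
    (upd : Finset (Fin m) → (Fin n → ℝ))
    (hupd : ∀ I, upd I =
      if (∑ i ∈ I, (F xk i)^2) = 0 then xk
      else fun j => xk j -
        γ * ((∑ i ∈ I, (F xk i)^2) / (∑ j', (∑ i ∈ I, F xk i * F' xk i j')^2)) *
          (∑ i ∈ I, F xk i * F' xk i j)) :
    (1 / (𝓘.card : ℝ)) * ∑ I ∈ 𝓘, ∑ j, (upd I j - xs j)^2 ≤
      (1 - (2*γ*(1-η) - γ^2)/((1+η^2)*κ^2)) * ∑ j, (xk j - xs j)^2 := by
  have hEnn : (0:ℝ) ≤ ∑ j, (xk j - xs j)^2 := Finset.sum_nonneg fun j _ => sq_nonneg _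
  have hκ0 : (0:ℝ) < κ := lt_of_lt_of_le one_pos hκ
  have hKpos : (0:ℝ) < (1+η^2)*κ^2 := by positivity
  have hδ : (0:ℝ) < 2*γ*(1-η) - γ^2 := by nlinarith
  have hcone' : ∀ i, |F xk i - ∑ j, F' xk i j * (xk j - xs j)| ≤ η * |F xk i| := by
    intro i
    have h := hcone i xk xs
    simpa [hroot i] using h
  have key : ∀ I ∈ 𝓘, ∑ j, (upd I j - xs j)^2 ≤
      (1 - (2*γ*(1-η) - γ^2)/((1+η^2)*κ^2)) * ∑ j, (xk j - xs j)^2 := by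
    intro I hI
    have hp := hmin I hI xk
    have hq := hmax I hI xk
    have hqp : σmax I xk ≤ κ * σmin I xk := by
      have h := hcond I hI xk
      exact (div_le_iff₀ hp).1 h
    by_cases hR : (∑ i ∈ I, (F xk i)^2) = 0
    · -- zero residual on I forces xk = xs
      have hri : ∀ i ∈ I, F xk i = 0 := by
        intro i hi
        have h := (Finset.sum_eq_zero_iff_of_nonneg (fun i _ => sq_nonneg (F xk i))).1 hR i hi
        exact pow_eq_zero_iff two_ne_zero |>.1 h
      have hti : ∀ i ∈ I, (∑ j, F' xk i j * (xk j - xs j)) = 0 := by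
        intro i hi
        have h := hcone' i
        rw [hri i hi] at h
        simp only [abs_zero, mul_zero, zero_sub, abs_neg] at h
        exact abs_eq_zero.1 (le_antisymm h (abs_nonneg _))
      have hE0 : ∑ j, (xk j - xs j)^2 = 0 := by
        have h1 := hlow I hI xk (fun j => xk j - xs j)
        have h2 : ∑ i ∈ I, (∑ j, F' xk i j * (xk j - xs j))^2 = 0 :=
          Finset.sum_eq_zero (fun i hi => by rw [hti i hi]; ring)
        rw [h2] at h1
        exact le_antisymm (by nlinarith [h1, pow_pos hp 2]) hEnn
      rw [hupd I, if_pos hR, hE0, mul_zero]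
    · rw [hupd I]
      simp only [if_neg hR]
      set R := ∑ i ∈ I, (F xk i)^2 with hRdef
      set G := ∑ j', (∑ i ∈ I, F xk i * F' xk i j')^2 with hGdef
      set a := ∑ i ∈ I, F xk i * (∑ j, F' xk i j * (xk j - xs j)) with hadef
      set E := ∑ j, (xk j - xs j)^2 with hEdef
      clear_value R G a E
      have hR' : (∑ i ∈ I, (F xk i)^2) ≠ 0 := by rw [← hRdef]; exact hR
      have hR0 : (0:ℝ) ≤ R := by
        rw [hRdef]; exact Finset.sum_nonneg fun _ _ => sq_nonneg _
      have hG0 : (0:ℝ) < G := by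
        rw [hGdef]
        exact lt_of_le_of_ne (Finset.sum_nonneg fun _ _ => sq_nonneg _)
          (Ne.symm (hdenom I hI hR'))
      -- expansion of the squared norm of the update
      have expand : ∑ j, (xk j - γ*(R/G)*(∑ i ∈ I, F xk i * F' xk i j) - xs j)^2
          = E - 2*(γ*(R/G))*a + (γ*(R/G))^2*G := by
        have h1 : ∀ j : Fin n, (xk j - γ*(R/G)*(∑ i ∈ I, F xk i * F' xk i j) - xs j)^2
            = (xk j - xs j)^2 - (2*(γ*(R/G)))*((∑ i ∈ I, F xk i * F' xk i j)*(xk j - xs j))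
              + (γ*(R/G))^2*(∑ i ∈ I, F xk i * F' xk i j)^2 := fun j => by ring
        rw [Finset.sum_congr rfl (fun j _ => h1 j), Finset.sum_add_distrib,
          Finset.sum_sub_distrib, ← Finset.mul_sum, ← Finset.mul_sum]
        have hswap : ∑ j, (∑ i ∈ I, F xk i * F' xk i j)*(xk j - xs j) = a := by
          rw [hadef]
          simp_rw [Finset.sum_mul, Finset.mul_sum, mul_assoc]
          rw [Finset.sum_comm]
        rw [hswap, hGdef, hEdef]
      -- componentwise tangential cone consequences
      have hrd : ∀ i ∈ I, F xk i * (F xk i - (∑ j, F' xk i j * (xk j - xs j))) ≤ η * (F xk i)^2 ∧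
          -(η * (F xk i)^2) ≤ F xk i * (F xk i - (∑ j, F' xk i j * (xk j - xs j))) := by
        intro i hi
        have h := hcone' i
        have habs : |F xk i * (F xk i - (∑ j, F' xk i j * (xk j - xs j)))| ≤ η * (F xk i)^2 := by
          rw [abs_mul]
          calc |F xk i| * |F xk i - (∑ j, F' xk i j * (xk j - xs j))|
              ≤ |F xk i| * (η * |F xk i|) := mul_le_mul_of_nonneg_left h (abs_nonneg _)
            _ = η * (F xk i)^2 := by rw [← sq_abs (F xk i)]; ring
        exact ⟨le_trans (le_abs_self _) habs, le_trans (neg_le_neg habs) (neg_abs_le _)⟩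
      have haL : (1-η)*R ≤ a := by
        rw [hadef, hRdef, Finset.mul_sum]
        refine Finset.sum_le_sum (fun i hi => ?_)
        have h := (hrd i hi).1
        nlinarith [h]
      have haU : a ≤ (1+η)*R := by
        rw [hadef, hRdef, Finset.mul_sum]
        refine Finset.sum_le_sum (fun i hi => ?_)
        have h := (hrd i hi).2
        nlinarith [h]
      have hcomp : ∀ i ∈ I, (∑ j, F' xk i j * (xk j - xs j))^2
          ≤ 2*(F xk i * (∑ j, F' xk i j * (xk j - xs j))) - (1-η^2)*(F xk i)^2 := by
        intro i hi
        have hb := abs_le.1 (hcone' i)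
        have h3 : (F xk i - ∑ j, F' xk i j * (xk j - xs j))^2 ≤ (η * |F xk i|)^2 :=
          sq_le_sq' hb.1 hb.2
        rw [mul_pow, sq_abs] at h3
        nlinarith [h3]
      have hAe2 : ∑ i ∈ I, (∑ j, F' xk i j * (xk j - xs j))^2 ≤ 2*a - (1-η^2)*R := by
        have h1 : 2*a - (1-η^2)*R = ∑ i ∈ I,
            (2*(F xk i * (∑ j, F' xk i j * (xk j - xs j))) - (1-η^2)*(F xk i)^2) := by
          rw [hadef, hRdef, Finset.sum_sub_distrib, ← Finset.mul_sum, ← Finset.mul_sum]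
        rw [h1]
        exact Finset.sum_le_sum hcomp
      have hlowI : (σmin I xk)^2 * E ≤ ∑ i ∈ I, (∑ j, F' xk i j * (xk j - xs j))^2 := by
        rw [hEdef]; exact hlow I hI xk (fun j => xk j - xs j)
      have step1 : (σmin I xk)^2 * E ≤ 2*a - (1-η^2)*R := le_trans hlowI hAe2
      -- G ≤ σmax² R
      have hGle : G ≤ (σmax I xk)^2 * R := by
        have hupI : ∑ i ∈ I, (∑ j, F' xk i j * (∑ i' ∈ I, F xk i' * F' xk i' j))^2
            ≤ (σmax I xk)^2 * G := by
          rw [hGdef]; exact hup I hI xk (fun j => ∑ i ∈ I, F xk i * F' xk i j)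
        have hCS : (∑ i ∈ I, F xk i * (∑ j, F' xk i j * (∑ i' ∈ I, F xk i' * F' xk i' j)))^2
            ≤ R * ∑ i ∈ I, (∑ j, F' xk i j * (∑ i' ∈ I, F xk i' * F' xk i' j))^2 := by
          rw [hRdef]
          exact Finset.sum_mul_sq_le_sq_mul_sq I (fun i => F xk i)
            (fun i => ∑ j, F' xk i j * (∑ i' ∈ I, F xk i' * F' xk i' j))
        have hGcomm : G = ∑ i ∈ I, F xk i *
            (∑ j, F' xk i j * (∑ i' ∈ I, F xk i' * F' xk i' j)) := by
          rw [hGdef]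
          simp_rw [sq, Finset.sum_mul, Finset.mul_sum]
          rw [Finset.sum_comm]
          refine Finset.sum_congr rfl (fun i _ => Finset.sum_congr rfl (fun j _ =>
            Finset.sum_congr rfl (fun i' _ => by ring)))
        have h1 : G^2 ≤ R * ((σmax I xk)^2*G) := by
          calc G^2 = (∑ i ∈ I, F xk i *
                (∑ j, F' xk i j * (∑ i' ∈ I, F xk i' * F' xk i' j)))^2 := by rw [hGcomm]
            _ ≤ R * ∑ i ∈ I, (∑ j, F' xk i j * (∑ i' ∈ I, F xk i' * F' xk i' j))^2 :=
                hCS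
            _ ≤ R * ((σmax I xk)^2*G) := mul_le_mul_of_nonneg_left hupI hR0
        nlinarith [hG0, h1]
      -- step 2 : the η-dependent scalar inequality
      have step2 : (2*γ*(1-η)-γ^2)*(2*a - (1-η^2)*R) ≤ (1+η^2)*(2*γ*a - γ^2*R) := by
        rcases le_or_gt 0 (η^2+2*η-1+γ) with hc | hc
        · have cert1 : 0 ≤ γ * ((η^2+2*η-1+γ) * (a - (1-η)*R)) :=
            mul_nonneg hγ0.le (mul_nonneg hc (by linarith))
          have cert2 : 0 ≤ γ*η*R*(2*(1-η)-γ) := by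
            apply mul_nonneg (mul_nonneg (mul_nonneg hγ0.le hη0) hR0); linarith
          nlinarith [cert1, cert2]
        · have cert1 : 0 ≤ γ * (-(η^2+2*η-1+γ) * ((1+η)*R - a)) :=
            mul_nonneg hγ0.le (mul_nonneg (by linarith) (by linarith))
          have cert2 : 0 ≤ γ*R*(2*η^2*(1+η)+γ*η) := by
            apply mul_nonneg (mul_nonneg hγ0.le hR0); nlinarith
          nlinarith [cert1, cert2]
      have step3 : 0 ≤ 2*γ*a - γ^2*R := by nlinarith [haL]
      -- assemble : δ E G ≤ (1+η²)κ² (2γa-γ²R) R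
      have c3 : (σmax I xk)^2 ≤ κ^2*(σmin I xk)^2 := by nlinarith [hqp, hp, hq]
      have final : (2*γ*(1-η)-γ^2)*E*G ≤ (1+η^2)*κ^2*((2*γ*a - γ^2*R)*R) := by
        have h1 : (2*γ*(1-η)-γ^2)*((σmin I xk)^2*E) ≤ (1+η^2)*(2*γ*a - γ^2*R) :=
          le_trans (mul_le_mul_of_nonneg_left step1 hδ.le) step2
        have c1 : (2*γ*(1-η)-γ^2)*((σmin I xk)^2*E)*G ≤ (1+η^2)*(2*γ*a - γ^2*R)*G :=
          mul_le_mul_of_nonneg_right h1 hG0.le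
        have c2 : (1+η^2)*(2*γ*a - γ^2*R)*G ≤ (1+η^2)*(2*γ*a - γ^2*R)*((σmax I xk)^2*R) := by
          refine mul_le_mul_of_nonneg_left hGle ?_
          refine mul_nonneg (by positivity) step3
        have c4 : (1+η^2)*(2*γ*a - γ^2*R)*((σmax I xk)^2*R)
            ≤ (1+η^2)*(2*γ*a - γ^2*R)*(κ^2*(σmin I xk)^2*R) := by
          refine mul_le_mul_of_nonneg_left ?_ (mul_nonneg (by positivity) step3)
          exact mul_le_mul_of_nonneg_right c3 hR0
        have c5 : ((2*γ*(1-η)-γ^2)*E*G)*(σmin I xk)^2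
            ≤ ((1+η^2)*κ^2*((2*γ*a - γ^2*R)*R))*(σmin I xk)^2 := by nlinarith [c1, c2, c4]
        exact le_of_mul_le_mul_right c5 (by positivity)
      have hEnn' : (0:ℝ) ≤ E := hEnn
      rw [expand]
      have keydiv : (2*γ*(1-η)-γ^2)*E/((1+η^2)*κ^2) ≤ (2*γ*a*R - γ^2*R^2)/G := by
        rw [div_le_div_iff₀ hKpos hG0]
        nlinarith [final]
      have e1 : (γ*(R/G))^2*G = γ^2*R^2/G := by
        field_simp
      have e2 : 2*(γ*(R/G))*a = 2*(γ*R*a)/G := by ring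
      have e3 : (2*γ*a*R - γ^2*R^2)/G = 2*(γ*R*a)/G - γ^2*R^2/G := by ring
      rw [e1, e2]
      have : (1 - (2*γ*(1-η) - γ^2)/((1+η^2)*κ^2)) * E = E - (2*γ*(1-η)-γ^2)*E/((1+η^2)*κ^2) := by
        ring
      rw [this]
      linarith [keydiv, e3]
  -- average over 𝓘
  have hcard : (0:ℝ) < (𝓘.card : ℝ) := by exact_mod_cast Finset.card_pos.2 h𝓘
  calc (1 / (𝓘.card : ℝ)) * ∑ I ∈ 𝓘, ∑ j, (upd I j - xs j)^2
      ≤ (1 / (𝓘.card : ℝ)) * ∑ _I ∈ 𝓘,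
          ((1 - (2*γ*(1-η) - γ^2)/((1+η^2)*κ^2)) * ∑ j, (xk j - xs j)^2) :=
        mul_le_mul_of_nonneg_left (Finset.sum_le_sum key) (by positivity)
    _ = (1 - (2*γ*(1-η) - γ^2)/((1+η^2)*κ^2)) * ∑ j, (xk j - xs j)^2 := by
        rw [Finset.sum_const, nsmul_eq_mul, ← mul_assoc, one_div,
          inv_mul_cancel₀ hcard.ne', one_mul]
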